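/- Let Γ be a numerical semigroup with multiplicity α₁ and conductor c. For every Γ-subsemimodule Δ with #(Γ \ Δ) = ℓ ≤ c, the Frobenius element satisfies γ_Δ ≤ (ℓ - 1)·α₁ + c - 1. In particular, max over Δ ∈ 𝒟_c of γ_Δ is at most (c-1)α₁ + c - 1. -/

import Mathlib

lemma frobenius_aux
    (Γ : Set ℕ) (h0 : 0 ∈ Γ)
    (hadd : ∀ a ∈ Γ, ∀ b ∈ Γ, a + b ∈ Γ)
    (α₁ : ℕ) (hα₁mem : α₁ ∈ Γ) (hα₁ne : α₁ ≠ 0)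
    (hα₁min : ∀ a ∈ Γ, a ≠ 0 → α₁ ≤ a)
    (c : ℕ) (hc : ∀ n, c ≤ n → n ∈ Γ) :
    ∀ ℓ : ℕ, 1 ≤ ℓ → ℓ ≤ c →
    ∀ Δ : Set ℕ, Δ ⊆ Γ →
      (∀ δ ∈ Δ, ∀ γ ∈ Γ, δ + γ ∈ Δ) →
      (Γ \ Δ).ncard = ℓ →
      ∀ γΔ, γΔ ∈ Γ \ Δ → (∀ x ∈ Γ \ Δ, x ≤ γΔ) →
      γΔ ≤ (ℓ - 1) * α₁ + c - 1 := by
  intro ℓ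
  induction ℓ with
  | zero => omega
  | succ n ih =>
    intro _ hℓc Δ hΔΓ hmod hcard γΔ hγmem hγmax
    have hfinΓΔ : (Γ \ Δ).Finite := by
      by_contra h
      rw [Set.Infinite.ncard h] at hcard
      omega
    by_cases hn : n = 0
    · -- ℓ = 1 : show γΔ = 0
      subst hn
      have hγ0 : γΔ = 0 := by
        by_contra hne
        have h0Δ : 0 ∈ Δ := by
          by_contra h0Δ
          have hpair : ({0, γΔ} : Set ℕ) ⊆ Γ \ Δ := by
            intro x hx
            rcases hx with hx | hx
            · subst hx; exact ⟨h0, h0Δ⟩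
            · simp at hx; subst hx; exact hγmem
          have h2 : ({0, γΔ} : Set ℕ).ncard = 2 := by
            rw [Set.ncard_pair (Ne.symm hne)]
          have := Set.ncard_le_ncard hpair hfinΓΔ
          omega
        have := hmod 0 h0Δ γΔ hγmem.1
        simp at this
        exact hγmem.2 this
      simp [hγ0]
    · -- ℓ ≥ 2
      have hγ0 : γΔ ≠ 0 := by
        intro h
        subst h
        have hsub : Γ \ Δ ⊆ {0} := fun x hx => Nat.le_zero.mp (hγmax x hx)
        have := Set.ncard_le_ncard hsub (Set.finite_singleton 0)
        simp at this
        omega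
      have hγα : α₁ ≤ γΔ := hα₁min γΔ hγmem.1 hγ0
      have hc1 : 1 ≤ c := by omega
      by_cases hsubΓ : γΔ - α₁ ∈ Γ
      · -- inductive step
        set Δ' := Δ ∪ {γΔ} with hΔ'
        have hΔ'Γ : Δ' ⊆ Γ := by
          intro x hx
          rcases hx with hx | hx
          · exact hΔΓ hx
          · simp at hx; subst hx; exact hγmem.1
        have hmod' : ∀ δ ∈ Δ', ∀ γ ∈ Γ, δ + γ ∈ Δ' := by
          intro δ hδ γ hγ
          rcases hδ with hδ | hδ
          · exact Or.inl (hmod δ hδ γ hγ)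
          · simp only [Set.mem_singleton_iff] at hδ; subst δ
            rcases Nat.eq_zero_or_pos γ with h | h
            · subst h; exact Or.inr (by simp)
            · left
              by_contra hnot
              have hmem : γΔ + γ ∈ Γ \ Δ := ⟨hadd γΔ hγmem.1 γ hγ, hnot⟩
              have := hγmax _ hmem
              omega
        have hdiff : Γ \ Δ' = (Γ \ Δ) \ {γΔ} := by
          ext x
          simp only [hΔ', Set.mem_diff, Set.mem_union, Set.mem_singleton_iff]
          tauto
        have hcard' : (Γ \ Δ').ncard = n := by
          rw [hdiff, Set.ncard_diff_singleton_of_mem hγmem, hcard]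
          omega
        have hfin' : (Γ \ Δ').Finite := hdiff ▸ hfinΓΔ.diff
        have hne' : (Γ \ Δ').Nonempty := by
          rw [← Set.ncard_pos hfin', hcard']
          omega
        obtain ⟨γ', hγ'mem, hγ'max⟩ := Set.Finite.exists_maximalFor id _ hfin' hne'
        have hγ'max' : ∀ x ∈ Γ \ Δ', x ≤ γ' := by
          intro x hx
          by_contra h
          have := hγ'max hx (by simp; omega)
          simp at this
          omega
        have hIH := ih (by omega) (by omega) Δ' hΔ'Γ hmod' hcard' γ' hγ'mem hγ'max'
        have hsubmem : γΔ - α₁ ∈ Γ \ Δ' := by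
          constructor
          · exact hsubΓ
          · intro hmem
            rcases hmem with hmem | hmem
            · have := hmod _ hmem α₁ hα₁mem
              rw [Nat.sub_add_cancel hγα] at this
              exact hγmem.2 this
            · simp only [Set.mem_singleton_iff] at hmem; omega
        have h1 : γΔ - α₁ ≤ γ' := hγ'max' _ hsubmem
        have h2 : (n - 1) * α₁ + α₁ = n * α₁ := by
          cases n with
          | zero => omega
          | succ m => simp [Nat.succ_sub_one, Nat.succ_mul]
        simp only [Nat.add_sub_cancel] at *
        omega
      · have hlt : γΔ - α₁ < c := by
          by_contra h
          exact hsubΓ (hc _ (by omega))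
        have hle : α₁ ≤ n * α₁ := Nat.le_mul_of_pos_left α₁ (by omega)
        simp only [Nat.add_sub_cancel]
        omega

/-- For every Γ-subsemimodule Δ with #(Γ \ Δ) = ℓ, 1 ≤ ℓ ≤ c, the Frobenius
element satisfies γΔ ≤ (ℓ-1)·α₁ + c - 1. -/
theorem frobenius_element_bound
    (Γ : Set ℕ) (h0 : 0 ∈ Γ)
    (hadd : ∀ a ∈ Γ, ∀ b ∈ Γ, a + b ∈ Γ)
    (hfin : (Γᶜ : Set ℕ).Finite)
    (α₁ : ℕ) (hα₁mem : α₁ ∈ Γ) (hα₁ne : α₁ ≠ 0)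
    (hα₁min : ∀ a ∈ Γ, a ≠ 0 → α₁ ≤ a)
    (c : ℕ) (hc : ∀ n, c ≤ n → n ∈ Γ)
    (hcmin : ∀ m, (∀ n, m ≤ n → n ∈ Γ) → c ≤ m)
    (ℓ : ℕ) (hℓ1 : 1 ≤ ℓ) (hℓc : ℓ ≤ c)
    (Δ : Set ℕ) (hΔΓ : Δ ⊆ Γ)
    (hmod : ∀ δ ∈ Δ, ∀ γ ∈ Γ, δ + γ ∈ Δ)
    (hcard : (Γ \ Δ).ncard = ℓ)
    (γΔ : ℕ) (hγmem : γΔ ∈ Γ \ Δ) (hγmax : ∀ x ∈ Γ \ Δ, x ≤ γΔ) :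
    γΔ ≤ (ℓ - 1) * α₁ + c - 1 :=
  frobenius_aux Γ h0 hadd α₁ hα₁mem hα₁ne hα₁min c hc ℓ hℓ1 hℓc Δ hΔΓ hmod hcard γΔ hγmem hγmax
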